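/- arXiv:math/0412191 — 7 statements merged into one kernel-verified Lean document; each statement's English description precedes it below -/
import Mathlib

section
/- Let B = !![a, b; c, d] ∈ SL₂(ℤ) and let φ = (φ₁, φ₂) ∈ ℝ². In the group of unit quaternions set X = u(2πφ₁), Y = u(2πφ₂) and T = j. Then there exists a group homomorphism ρ from the presented group ⟨x, y, τ ∣ [x,y] = 1, τ x τ⁻¹ = xᵃ yᶜ, τ y τ⁻¹ = xᵇ yᵈ⟩ to the group of unit quaternions with ρ(x) = X, ρ(y) = Y, ρ(τ) = T if and only if (a+1)φ₁ + cφ₂ ∈ ℤ and bφ₁ + (d+1)φ₂ ∈ ℤ (i.e. φ(B+I) ∈ ℤ²). Equivalently, the relations T X T⁻¹ = Xᵃ Yᶜ and T Y T⁻¹ = Xᵇ Yᵈ hold (X and Y always commute) if and only if φ(B+I) ∈ ℤ². -/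
open Real

/-- The unit quaternion `cos θ + (sin θ) i`. -/
noncomputable def uq (θ : ℝ) : Quaternion ℝ := ⟨Real.cos θ, Real.sin θ, 0, 0⟩

/-- The quaternion unit `j`. -/
def jq : Quaternion ℝ := ⟨0, 0, 1, 0⟩

/-- Relations for the presented group
`⟨x, y, τ ∣ [x,y] = 1, τ x τ⁻¹ = xᵃ yᶜ, τ y τ⁻¹ = xᵇ yᵈ⟩`
(the fundamental group of the mapping torus of a torus homeomorphism with
monodromy matrix `!![a, b; c, d]`), on generators `x = 0`, `y = 1`, `τ = 2`. -/
def mappingTorusRels (a b c d : ℤ) : Set (FreeGroup (Fin 3)) :=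
  { FreeGroup.of 0 * FreeGroup.of 1 * (FreeGroup.of 0)⁻¹ * (FreeGroup.of 1)⁻¹,
    FreeGroup.of 2 * FreeGroup.of 0 * (FreeGroup.of 2)⁻¹ *
      ((FreeGroup.of 0) ^ a * (FreeGroup.of 1) ^ c)⁻¹,
    FreeGroup.of 2 * FreeGroup.of 1 * (FreeGroup.of 2)⁻¹ *
      ((FreeGroup.of 0) ^ b * (FreeGroup.of 1) ^ d)⁻¹ }

@[simp] lemma uq_re (θ : ℝ) : (uq θ).re = Real.cos θ := rfl
@[simp] lemma uq_imI (θ : ℝ) : (uq θ).imI = Real.sin θ := rfl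
@[simp] lemma uq_imJ (θ : ℝ) : (uq θ).imJ = 0 := rfl
@[simp] lemma uq_imK (θ : ℝ) : (uq θ).imK = 0 := rfl
@[simp] lemma jq_re : jq.re = 0 := rfl
@[simp] lemma jq_imI : jq.imI = 0 := rfl
@[simp] lemma jq_imJ : jq.imJ = 1 := rfl
@[simp] lemma jq_imK : jq.imK = 0 := rfl

lemma uq_mul (α β : ℝ) : uq α * uq β = uq (α + β) := by
  apply Quaternion.ext <;>
    simp [Quaternion.re_mul, Quaternion.imI_mul, Quaternion.imJ_mul, Quaternion.imK_mul,
      Real.cos_add, Real.sin_add] <;> ring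

@[simp] lemma uq_zero : uq 0 = 1 := by
  apply Quaternion.ext <;> simp [Quaternion.re_one, Quaternion.imI_one, Quaternion.imJ_one, Quaternion.imK_one]

lemma uq_norm (θ : ℝ) : ‖uq θ‖ = 1 := by
  have h : Quaternion.normSq (uq θ) = 1 := by simp [Quaternion.normSq_def']
  have := Quaternion.normSq_eq_norm_mul_self (uq θ)
  nlinarith [norm_nonneg (uq θ)]

lemma jq_norm : ‖jq‖ = 1 := by
  have h : Quaternion.normSq jq = 1 := by simp [Quaternion.normSq_def']
  have := Quaternion.normSq_eq_norm_mul_self jq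
  nlinarith [norm_nonneg jq]

lemma uq_ne_zero (θ : ℝ) : uq θ ≠ 0 := by
  intro h; have := uq_norm θ; rw [h] at this; simp at this

lemma jq_ne_zero : jq ≠ 0 := by
  intro h; have := jq_norm; rw [h] at this; simp at this

lemma uq_inv (θ : ℝ) : (uq θ)⁻¹ = uq (-θ) := by
  apply inv_eq_of_mul_eq_one_right
  rw [uq_mul, add_neg_cancel, uq_zero]

lemma uq_zpow (θ : ℝ) (n : ℤ) : uq θ ^ n = uq (n * θ) := by
  induction n using Int.induction_on with
  | zero => simp
  | succ k ih =>
      rw [zpow_add_one₀ (uq_ne_zero θ), ih, uq_mul]; push_cast; ring_nf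
  | pred k ih =>
      rw [zpow_sub_one₀ (uq_ne_zero θ), ih, uq_inv, uq_mul]
      congr 1; push_cast; ring

lemma jq_inv : jq⁻¹ = -jq := by
  apply inv_eq_of_mul_eq_one_right
  apply Quaternion.ext <;>
    simp [Quaternion.re_mul, Quaternion.imI_mul, Quaternion.imJ_mul, Quaternion.imK_mul, Quaternion.re_one, Quaternion.imI_one, Quaternion.imJ_one, Quaternion.imK_one]

lemma jq_conj (θ : ℝ) : jq * uq θ * jq⁻¹ = uq (-θ) := by
  rw [jq_inv]
  apply Quaternion.ext <;>
    simp [Quaternion.re_mul, Quaternion.imI_mul, Quaternion.imJ_mul, Quaternion.imK_mul]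

lemma uq_eq_one_iff (θ : ℝ) : uq θ = 1 ↔ ∃ n : ℤ, θ = n * (2 * π) := by
  constructor
  · intro h
    have h1 : Real.cos θ = 1 := congrArg QuaternionAlgebra.re h
    obtain ⟨n, hn⟩ := (Real.cos_eq_one_iff θ).1 h1
    exact ⟨n, hn.symm⟩
  · rintro ⟨n, rfl⟩
    have hs : Real.sin ((n : ℝ) * (2 * π)) = 0 := by
      rw [show (n : ℝ) * (2 * π) = ((2 * n : ℤ) : ℝ) * π by push_cast; ring]
      exact Real.sin_int_mul_pi _
    apply Quaternion.ext <;> simp [Real.cos_int_mul_two_pi, hs, Quaternion.re_one, Quaternion.imI_one, Quaternion.imJ_one, Quaternion.imK_one]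

lemma uq_eq_iff (α β : ℝ) : uq α = uq β ↔ ∃ n : ℤ, α - β = n * (2 * π) := by
  rw [← uq_eq_one_iff, show α - β = α + (-β) from by ring, ← uq_mul, ← uq_inv]
  constructor
  · intro h; rw [h, mul_inv_cancel₀ (uq_ne_zero β)]
  · intro h
    have := congrArg (· * uq β) h
    simpa [mul_assoc, inv_mul_cancel₀ (uq_ne_zero β)] using this

lemma quat_rel_iff (p q : ℤ) (ψ₁ ψ₂ ψ : ℝ) :
    (jq * uq (2 * π * ψ) * jq⁻¹ = uq (2 * π * ψ₁) ^ p * uq (2 * π * ψ₂) ^ q) ↔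
      ∃ n : ℤ, (p : ℝ) * ψ₁ + (q : ℝ) * ψ₂ + ψ = n := by
  have hπ : (2 * π) ≠ 0 := by positivity
  rw [jq_conj, uq_zpow, uq_zpow, uq_mul, uq_eq_iff]
  constructor
  · rintro ⟨n, h⟩
    refine ⟨-n, ?_⟩
    have h2 : (2 * π) * ((p : ℝ) * ψ₁ + (q : ℝ) * ψ₂ + ψ) = (2 * π) * (((-n : ℤ) : ℝ)) := by
      push_cast
      linear_combination -h
    exact mul_left_cancel₀ hπ h2
  · rintro ⟨n, h⟩
    exact ⟨-n, by push_cast; linear_combination -(2 * π) * h⟩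

lemma norm_one_mem (x : Quaternion ℝ) (h : ‖x‖ = 1) :
    x ∈ Metric.sphere (0 : Quaternion ℝ) 1 := mem_sphere_zero_iff_norm.mpr h

set_option maxHeartbeats 1000000 in
/-- the representation `ρ_φ` (sending `x ↦ u(2πφ₁)`, `y ↦ u(2πφ₂)`,
`τ ↦ j`) exists as a homomorphism from `π₁M` to the group of unit quaternions iff
`φ(B+I) ∈ ℤ²`; equivalently, the quaternion relations `T X T⁻¹ = Xᵃ Yᶜ` and
`T Y T⁻¹ = Xᵇ Yᵈ` hold iff `φ(B+I) ∈ ℤ²`. -/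
theorem rho_phi_factors_iff (a b c d : ℤ)
    (hdet : (!![a, b; c, d] : Matrix (Fin 2) (Fin 2) ℤ).det = 1) (φ₁ φ₂ : ℝ) :
    ((∃ ρ : PresentedGroup (mappingTorusRels a b c d) →*
        Metric.sphere (0 : Quaternion ℝ) 1,
        ((ρ (PresentedGroup.of 0) : Quaternion ℝ) = uq (2 * π * φ₁) ∧
         (ρ (PresentedGroup.of 1) : Quaternion ℝ) = uq (2 * π * φ₂) ∧
         (ρ (PresentedGroup.of 2) : Quaternion ℝ) = jq)) ↔
      ((∃ n : ℤ, ((a : ℝ) + 1) * φ₁ + (c : ℝ) * φ₂ = n) ∧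
       (∃ n : ℤ, (b : ℝ) * φ₁ + ((d : ℝ) + 1) * φ₂ = n))) ∧
    ((jq * uq (2 * π * φ₁) * jq⁻¹ = uq (2 * π * φ₁) ^ a * uq (2 * π * φ₂) ^ c ∧
      jq * uq (2 * π * φ₂) * jq⁻¹ = uq (2 * π * φ₁) ^ b * uq (2 * π * φ₂) ^ d) ↔
      ((∃ n : ℤ, ((a : ℝ) + 1) * φ₁ + (c : ℝ) * φ₂ = n) ∧
       (∃ n : ℤ, (b : ℝ) * φ₁ + ((d : ℝ) + 1) * φ₂ = n))) := by
  have hquat :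
      (jq * uq (2 * π * φ₁) * jq⁻¹ = uq (2 * π * φ₁) ^ a * uq (2 * π * φ₂) ^ c ∧
        jq * uq (2 * π * φ₂) * jq⁻¹ = uq (2 * π * φ₁) ^ b * uq (2 * π * φ₂) ^ d) ↔
      ((∃ n : ℤ, ((a : ℝ) + 1) * φ₁ + (c : ℝ) * φ₂ = n) ∧
       (∃ n : ℤ, (b : ℝ) * φ₁ + ((d : ℝ) + 1) * φ₂ = n)) := by
    rw [quat_rel_iff a c φ₁ φ₂ φ₁, quat_rel_iff b d φ₁ φ₂ φ₂]
    constructor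
    · rintro ⟨⟨n₁, h₁⟩, n₂, h₂⟩
      exact ⟨⟨n₁, by linarith⟩, ⟨n₂, by linarith⟩⟩
    · rintro ⟨⟨n₁, h₁⟩, n₂, h₂⟩
      exact ⟨⟨n₁, by linarith⟩, ⟨n₂, by linarith⟩⟩
  refine ⟨?_, hquat⟩
  rw [← hquat]
  constructor
  · rintro ⟨ρ, hx, hy, ht⟩
    have key : ∀ r ∈ mappingTorusRels a b c d,
        ρ (PresentedGroup.mk (mappingTorusRels a b c d) r) = 1 := by
      intro r hr
      have h0 : PresentedGroup.mk (mappingTorusRels a b c d) r = 1 :=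
        (QuotientGroup.eq_one_iff _).mpr (Subgroup.subset_normalClosure hr)
      rw [h0, map_one]
    have hne1 : uq (2 * π * φ₁) ^ a * uq (2 * π * φ₂) ^ c ≠ 0 :=
      mul_ne_zero (zpow_ne_zero _ (uq_ne_zero _)) (zpow_ne_zero _ (uq_ne_zero _))
    have hne2 : uq (2 * π * φ₁) ^ b * uq (2 * π * φ₂) ^ d ≠ 0 :=
      mul_ne_zero (zpow_ne_zero _ (uq_ne_zero _)) (zpow_ne_zero _ (uq_ne_zero _))
    have hx' : (ρ (PresentedGroup.mk (mappingTorusRels a b c d) (FreeGroup.of 0)) :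
        Quaternion ℝ) = uq (2 * π * φ₁) := hx
    have hy' : (ρ (PresentedGroup.mk (mappingTorusRels a b c d) (FreeGroup.of 1)) :
        Quaternion ℝ) = uq (2 * π * φ₂) := hy
    have ht' : (ρ (PresentedGroup.mk (mappingTorusRels a b c d) (FreeGroup.of 2)) :
        Quaternion ℝ) = jq := ht
    constructor
    · have h1 := key _ (show _ ∈ mappingTorusRels a b c d by
        right; left; rfl)
      simp only [map_mul, map_inv, map_zpow] at h1
      have h2 := congrArg (Subtype.val) h1
      push_cast at h2
      rw [hx', hy', ht'] at h2
      exact (mul_inv_eq_one₀ hne1).mp h2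
    · have h1 := key _ (show _ ∈ mappingTorusRels a b c d by
        right; right; rfl)
      simp only [map_mul, map_inv, map_zpow] at h1
      have h2 := congrArg (Subtype.val) h1
      push_cast at h2
      rw [hx', hy', ht'] at h2
      exact (mul_inv_eq_one₀ hne2).mp h2
  · rintro ⟨rel1, rel2⟩
    set X : Metric.sphere (0 : Quaternion ℝ) 1 :=
      ⟨uq (2 * π * φ₁), norm_one_mem _ (uq_norm _)⟩ with hX
    set Y : Metric.sphere (0 : Quaternion ℝ) 1 :=
      ⟨uq (2 * π * φ₂), norm_one_mem _ (uq_norm _)⟩ with hY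
    set T : Metric.sphere (0 : Quaternion ℝ) 1 :=
      ⟨jq, norm_one_mem _ jq_norm⟩ with hT
    have hrels : ∀ r ∈ mappingTorusRels a b c d,
        FreeGroup.lift (![X, Y, T] : Fin 3 → _) r = 1 := by
      intro r hr
      have hne1 : uq (2 * π * φ₁) ^ a * uq (2 * π * φ₂) ^ c ≠ 0 :=
        mul_ne_zero (zpow_ne_zero _ (uq_ne_zero _)) (zpow_ne_zero _ (uq_ne_zero _))
      have hne2 : uq (2 * π * φ₁) ^ b * uq (2 * π * φ₂) ^ d ≠ 0 :=
        mul_ne_zero (zpow_ne_zero _ (uq_ne_zero _)) (zpow_ne_zero _ (uq_ne_zero _))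
      rcases hr with rfl | rfl | rfl
      · apply Subtype.ext
        simp only [map_mul, map_inv, FreeGroup.lift_apply_of, Matrix.cons_val_zero, Matrix.cons_val_one, Matrix.head_cons, Matrix.cons_val_two, Matrix.tail_cons]
        push_cast
        rw [uq_inv, uq_inv, uq_mul, uq_mul, uq_mul]
        rw [show 2 * π * φ₁ + 2 * π * φ₂ + -(2 * π * φ₁) + -(2 * π * φ₂) = 0 by ring, uq_zero]
      · apply Subtype.ext
        simp only [map_mul, map_inv, map_zpow, FreeGroup.lift_apply_of, Matrix.cons_val_zero, Matrix.cons_val_one, Matrix.head_cons, Matrix.cons_val_two, Matrix.tail_cons]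
        push_cast
        exact (mul_inv_eq_one₀ hne1).mpr rel1
      · apply Subtype.ext
        simp only [map_mul, map_inv, map_zpow, FreeGroup.lift_apply_of, Matrix.cons_val_zero, Matrix.cons_val_one, Matrix.head_cons, Matrix.cons_val_two, Matrix.tail_cons]
        push_cast
        exact (mul_inv_eq_one₀ hne2).mpr rel2
    refine ⟨PresentedGroup.toGroup hrels, ?_, ?_, ?_⟩ <;>
      rw [PresentedGroup.toGroup.of] <;> simp [hX, hY, hT, Matrix.cons_val_zero, Matrix.cons_val_one, Matrix.head_cons, Matrix.cons_val_two, Matrix.tail_cons]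
end

section
/- Let φ = (φ₁, φ₂) ∈ ℝ². There exists a unit quaternion q such that q·u(2πφ₁)·q⁻¹, q·u(2πφ₂)·q⁻¹ and q·j·q⁻¹ all lie in the real subalgebra ℝ ⊕ ℝi of the quaternions if and only if φ₁ ∈ (1/2)ℤ and φ₂ ∈ (1/2)ℤ. (That is, the representation ρ_φ is reducible if and only if φ ∈ ((1/2)ℤ)².) -/
open Real

/-- Key algebraic lemma: if a unit quaternion `(a,b,c,d)` conjugates `j` into `ℝ ⊕ ℝi`
and also kills the `j,k`-components of the conjugate of `cos θ + sin θ i`, then `sin θ = 0`. -/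
lemma key_alg (a b c d s : ℝ) (hn : a ^ 2 + b ^ 2 + c ^ 2 + d ^ 2 = 1)
    (hj1 : a ^ 2 - b ^ 2 + c ^ 2 - d ^ 2 = 0) (hj2 : c * d + a * b = 0)
    (h3 : s * (b * c + a * d) = 0) (h4 : s * (b * d - a * c) = 0) : s = 0 := by
  by_contra hs
  have e1 : b * c + a * d = 0 := by
    rcases mul_eq_zero.mp h3 with h | h
    · exact absurd h hs
    · exact h
  have e2 : b * d - a * c = 0 := by
    rcases mul_eq_zero.mp h4 with h | h
    · exact absurd h hs
    · exact h
  have e3 : a * (c ^ 2 + d ^ 2) = 0 := by linear_combination d * e1 - c * e2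
  rcases mul_eq_zero.mp e3 with ha | hcd
  · subst ha
    have hc2 : c ^ 2 = 1 / 2 := by nlinarith
    have hc : c ≠ 0 := by
      intro h; rw [h] at hc2; norm_num at hc2
    have hb : b = 0 := by
      have : b * c = 0 := by linarith
      rcases mul_eq_zero.mp this with h | h
      · exact h
      · exact absurd h hc
    have hd : d = 0 := by
      have : c * d = 0 := by linarith
      rcases mul_eq_zero.mp this with h | h
      · exact absurd h hc
      · exact h
    rw [hb, hd] at hj1
    nlinarith
  · have hc : c = 0 := by nlinarith [sq_nonneg c, sq_nonneg d]
    have hd : d = 0 := by nlinarith [sq_nonneg c, sq_nonneg d]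
    subst hc; subst hd
    have hab : a * b = 0 := by linarith
    rcases mul_eq_zero.mp hab with h | h <;> (rw [h] at hj1 hn; nlinarith)

/-- From `sin (2πφ) = 0` deduce `φ = n/2`. -/
lemma half_int_of_sin (φ : ℝ) (h : Real.sin (2 * π * φ) = 0) : ∃ n : ℤ, φ = n / 2 := by
  obtain ⟨n, hn⟩ := Real.sin_eq_zero_iff.mp h
  refine ⟨n, ?_⟩
  have hπ : (π : ℝ) ≠ 0 := Real.pi_ne_zero
  have h2 : (n : ℝ) * π = (2 * φ) * π := by linear_combination hn
  have := mul_right_cancel₀ hπ h2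
  linarith

/-- there is a unit quaternion conjugating `u(2πφ₁)`, `u(2πφ₂)` and `j`
into the subalgebra `ℝ ⊕ ℝi` iff `φ₁, φ₂ ∈ (1/2)ℤ`; that is, `ρ_φ` is reducible iff
`φ ∈ ((1/2)ℤ)²`. -/
theorem rho_phi_reducible_iff (φ₁ φ₂ : ℝ) :
    (∃ q : Quaternion ℝ, ‖q‖ = 1 ∧
      ((q * uq (2 * π * φ₁) * q⁻¹).imJ = 0 ∧ (q * uq (2 * π * φ₁) * q⁻¹).imK = 0) ∧
      ((q * uq (2 * π * φ₂) * q⁻¹).imJ = 0 ∧ (q * uq (2 * π * φ₂) * q⁻¹).imK = 0) ∧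
      ((q * jq * q⁻¹).imJ = 0 ∧ (q * jq * q⁻¹).imK = 0)) ↔
    ((∃ n : ℤ, φ₁ = n / 2) ∧ (∃ n : ℤ, φ₂ = n / 2)) := by
  constructor
  · rintro ⟨q, hq, ⟨h1J, h1K⟩, ⟨h2J, h2K⟩, ⟨h3J, h3K⟩⟩
    have hns : Quaternion.normSq q = 1 := by
      have h := Quaternion.normSq_eq_norm_mul_self q
      rw [hq] at h; simpa using h
    have hinv : q⁻¹ = star q := by
      rw [Quaternion.inv_def, hns]; simp
    rw [hinv] at h1J h1K h2J h2K h3J h3K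
    simp only [Quaternion.imJ_mul, Quaternion.imI_mul, Quaternion.imK_mul,
      Quaternion.re_mul, Quaternion.imJ_star, Quaternion.imI_star, Quaternion.imK_star,
      Quaternion.re_star] at h1J h1K h2J h2K h3J h3K
    simp only [uq, jq] at h1J h1K h2J h2K h3J h3K
    have hn : q.re ^ 2 + q.imI ^ 2 + q.imJ ^ 2 + q.imK ^ 2 = 1 := by
      rw [Quaternion.normSq_def'] at hns; linarith
    have hj1 : q.re ^ 2 - q.imI ^ 2 + q.imJ ^ 2 - q.imK ^ 2 = 0 := by linear_combination h3J
    have hj2 : q.imJ * q.imK + q.re * q.imI = 0 := by linear_combination h3K / 2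
    have hs1 : Real.sin (2 * π * φ₁) = 0 := by
      refine key_alg q.re q.imI q.imJ q.imK _ hn hj1 hj2 ?_ ?_
      · linear_combination h1J / 2
      · linear_combination h1K / 2
    have hs2 : Real.sin (2 * π * φ₂) = 0 := by
      refine key_alg q.re q.imI q.imJ q.imK _ hn hj1 hj2 ?_ ?_
      · linear_combination h2J / 2
      · linear_combination h2K / 2
    exact ⟨half_int_of_sin φ₁ hs1, half_int_of_sin φ₂ hs2⟩
  · rintro ⟨⟨n₁, hn₁⟩, ⟨n₂, hn₂⟩⟩
    set r : ℝ := (Real.sqrt 2)⁻¹ with hr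
    have hr2 : r ^ 2 = 1 / 2 := by
      rw [hr, inv_pow, Real.sq_sqrt (by norm_num : (2:ℝ) ≥ 0)]
      norm_num
    obtain ⟨q0, hq0⟩ : ∃ q0 : Quaternion ℝ, q0 = ⟨0, r, r, 0⟩ := ⟨⟨0, r, r, 0⟩, rfl⟩
    have hns : Quaternion.normSq q0 = 1 := by
      rw [Quaternion.normSq_def', hq0]
      show (0:ℝ) ^ 2 + r ^ 2 + r ^ 2 + (0:ℝ) ^ 2 = 1
      nlinarith
    have hq : ‖q0‖ = 1 := by
      have h := Quaternion.normSq_eq_norm_mul_self q0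
      rw [hns] at h
      rcases mul_self_eq_one_iff.mp h.symm with h1 | h1
      · exact h1
      · have := norm_nonneg q0; linarith
    have hinv : q0⁻¹ = star q0 := by
      rw [Quaternion.inv_def, hns]; simp
    have hs1 : Real.sin (2 * π * φ₁) = 0 := by
      rw [hn₁, show 2 * π * ((n₁ : ℝ) / 2) = n₁ * π by ring]
      exact Real.sin_int_mul_pi n₁
    have hs2 : Real.sin (2 * π * φ₂) = 0 := by
      rw [hn₂, show 2 * π * ((n₂ : ℝ) / 2) = n₂ * π by ring]
      exact Real.sin_int_mul_pi n₂
    refine ⟨q0, hq, ?_⟩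
    rw [hinv]
    simp only [Quaternion.imJ_mul, Quaternion.imI_mul, Quaternion.imK_mul,
      Quaternion.re_mul, Quaternion.imJ_star, Quaternion.imI_star, Quaternion.imK_star,
      Quaternion.re_star]
    simp only [hq0, uq, jq, hs1, hs2]
    refine ⟨⟨by ring, by ring⟩, ⟨by ring, by ring⟩, ⟨by ring, by ring⟩⟩
end

section
/- Let B ∈ SL₂(ℤ) with |tr B| ≠ 2, and let φ₀, ψ₀ ∈ ℝ² with φ₀(B+I) ∈ ℤ², ψ₀(B+I) ∈ ℤ², φ₀ ∉ ((1/2)ℤ)² and ψ₀ ∉ ((1/2)ℤ)². Then there exist signs ε, ε' ∈ {1, −1}, integer vectors m, n ∈ ℤ², and a coprime pair (p, q) ∈ ℤ² such that, setting φ = ε·φ₀ + m and ψ = ε'·ψ₀ + n, one has (φ − ψ)(B+I)·(p,q)ᵀ = 0 and (1−t)φ + tψ ∉ ((1/2)ℤ)² for all t ∈ [0,1]. -/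
/-- The row vector `φ(B+I)` for `B = !![a, b; c, d]`. -/
noncomputable def rowBI (a b c d : ℤ) (v : ℝ × ℝ) : ℝ × ℝ :=
  (((a : ℝ) + 1) * v.1 + (c : ℝ) * v.2, (b : ℝ) * v.1 + ((d : ℝ) + 1) * v.2)

/-- The pairing of a real row vector with an integer column vector `(p, q)ᵀ`. -/
noncomputable def dotZ (v : ℝ × ℝ) (p q : ℤ) : ℝ := v.1 * (p : ℝ) + v.2 * (q : ℝ)

/-- Membership in the half-integer lattice `((1/2)ℤ)²`. -/
def halfLat (v : ℝ × ℝ) : Prop :=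
  (∃ n : ℤ, v.1 = (n : ℝ) / 2) ∧ (∃ n : ℤ, v.2 = (n : ℝ) / 2)

/-- Membership in the half-integer lattice of `ℝ`. -/
def Hh (x : ℝ) : Prop := ∃ n : ℤ, x = (n : ℝ) / 2

lemma not_Hh_of {x : ℝ} (h0 : 0 < x) (h1 : x < 1/2) : ¬ Hh x := by
  rintro ⟨n, rfl⟩
  have hn0 : (0:ℤ) < n := by exact_mod_cast (by linarith : (0:ℝ) < n)
  have hn1 : n < 1 := by exact_mod_cast (by linarith : (n:ℝ) < 1)
  omega

lemma exists_sign_shift (x : ℝ) (hx : ¬ Hh x) :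
    ∃ (ε : ℝ) (m : ℤ), (ε = 1 ∨ ε = -1) ∧ 0 < ε * x + m ∧ ε * x + m < 1/2 := by
  have hxf : (⌊x⌋ : ℝ) + Int.fract x = x := Int.floor_add_fract x
  have hf0 : Int.fract x ≠ 0 := fun h => hx ⟨2 * ⌊x⌋, by push_cast; linarith⟩
  have hfh : Int.fract x ≠ 1/2 := fun h => hx ⟨2 * ⌊x⌋ + 1, by push_cast; linarith⟩
  have h0 := Int.fract_nonneg x
  have h1 := Int.fract_lt_one x
  have h0' : 0 < Int.fract x := lt_of_le_of_ne h0 (Ne.symm hf0)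
  rcases lt_or_gt_of_ne hfh with hlt | hgt
  · exact ⟨1, -⌊x⌋, Or.inl rfl, by push_cast; linarith, by push_cast; linarith⟩
  · exact ⟨-1, ⌊x⌋ + 1, Or.inr rfl, by push_cast; linarith, by push_cast; linarith⟩

lemma exists_shift_half (x : ℝ) (hx : Hh x) :
    ∃ m : ℤ, x + m = 0 ∨ x + m = 1/2 := by
  obtain ⟨n, rfl⟩ := hx
  rcases Int.even_or_odd n with ⟨k, hk⟩ | ⟨k, hk⟩
  · exact ⟨-k, Or.inl (by subst hk; push_cast; ring)⟩
  · exact ⟨-k, Or.inr (by subst hk; push_cast; ring)⟩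

lemma exists_coprime_dot (k l : ℤ) : ∃ p q : ℤ, IsCoprime p q ∧ k * p + l * q = 0 := by
  by_cases h : k = 0 ∧ l = 0
  · exact ⟨1, 0, isCoprime_one_left, by simp [h.1, h.2]⟩
  · have hg : Int.gcd k l ≠ 0 := fun h0 => h (Int.gcd_eq_zero_iff.mp h0)
    have hgpos : 0 < Int.gcd k l := Nat.pos_of_ne_zero hg
    have hgne : (Int.gcd k l : ℤ) ≠ 0 := by exact_mod_cast hg
    obtain ⟨k', hk'⟩ := (Int.gcd_dvd_left k l : (Int.gcd k l : ℤ) ∣ k)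
    obtain ⟨l', hl'⟩ := (Int.gcd_dvd_right k l : (Int.gcd k l : ℤ) ∣ l)
    have hco : Int.gcd (k / (Int.gcd k l : ℤ)) (l / (Int.gcd k l : ℤ)) = 1 :=
      Int.gcd_div_gcd_div_gcd hgpos
    have hkd : k / (Int.gcd k l : ℤ) = k' := by
      nth_rewrite 1 [hk']; exact Int.mul_ediv_cancel_left _ hgne
    have hld : l / (Int.gcd k l : ℤ) = l' := by
      nth_rewrite 1 [hl']; exact Int.mul_ediv_cancel_left _ hgne
    rw [hkd, hld] at hco
    refine ⟨l', -k', ?_, by linear_combination l' * hk' - k' * hl'⟩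
    rw [Int.isCoprime_iff_gcd_eq_one]
    have : Int.gcd l' (-k') = Int.gcd k' l' := by
      simp [Int.gcd, Int.natAbs_neg, Nat.gcd_comm]
    rw [this]; exact hco

lemma convex_bound {A B t : ℝ} (hA0 : 0 < A) (hA : A < 1/2) (hB0 : 0 < B) (hB : B < 1/2)
    (ht0 : 0 ≤ t) (ht1 : t ≤ 1) : 0 < (1-t)*A + t*B ∧ (1-t)*A + t*B < 1/2 := by
  rcases eq_or_lt_of_le ht0 with h | h
  · constructor <;> nlinarith
  · constructor <;>
      nlinarith [mul_pos h hB0, mul_nonneg (sub_nonneg.mpr ht1) hA0.le,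
        mul_lt_mul_of_pos_left hB h, mul_le_mul_of_nonneg_left hA.le (sub_nonneg.mpr ht1)]

lemma rowBI_transformed_int (a b c d : ℤ) (v : ℝ × ℝ)
    (hv : (∃ n : ℤ, (rowBI a b c d v).1 = n) ∧ (∃ n : ℤ, (rowBI a b c d v).2 = n))
    (ε : ℝ) (hε : ε = 1 ∨ ε = -1) (m : ℤ × ℤ) :
    ∃ K L : ℤ, (rowBI a b c d (ε * v.1 + (m.1:ℝ), ε * v.2 + (m.2:ℝ))).1 = K ∧
               (rowBI a b c d (ε * v.1 + (m.1:ℝ), ε * v.2 + (m.2:ℝ))).2 = L := by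
  obtain ⟨⟨K0, hK0⟩, ⟨L0, hL0⟩⟩ := hv
  simp only [rowBI] at hK0 hL0 ⊢
  rcases hε with rfl | rfl
  · exact ⟨K0 + ((a+1) * m.1 + c * m.2), L0 + (b * m.1 + (d+1) * m.2),
      by push_cast; linear_combination hK0, by push_cast; linear_combination hL0⟩
  · exact ⟨-K0 + ((a+1) * m.1 + c * m.2), -L0 + (b * m.1 + (d+1) * m.2),
      by push_cast; linear_combination -hK0, by push_cast; linear_combination -hL0⟩

lemma exists_dot (a b c d : ℤ) (φ₀ ψ₀ : ℝ × ℝ)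
    (hφ₀ : (∃ n : ℤ, (rowBI a b c d φ₀).1 = n) ∧ (∃ n : ℤ, (rowBI a b c d φ₀).2 = n))
    (hψ₀ : (∃ n : ℤ, (rowBI a b c d ψ₀).1 = n) ∧ (∃ n : ℤ, (rowBI a b c d ψ₀).2 = n))
    (ε ε' : ℝ) (hε : ε = 1 ∨ ε = -1) (hε' : ε' = 1 ∨ ε' = -1) (m n : ℤ × ℤ) :
    ∃ p q : ℤ, IsCoprime p q ∧
      dotZ (rowBI a b c d ((ε * φ₀.1 + (m.1:ℝ), ε * φ₀.2 + (m.2:ℝ)) -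
        (ε' * ψ₀.1 + (n.1:ℝ), ε' * ψ₀.2 + (n.2:ℝ)))) p q = 0 := by
  obtain ⟨K1, L1, hK1, hL1⟩ := rowBI_transformed_int a b c d φ₀ hφ₀ ε hε m
  obtain ⟨K2, L2, hK2, hL2⟩ := rowBI_transformed_int a b c d ψ₀ hψ₀ ε' hε' n
  obtain ⟨p, q, hpq, hsum⟩ := exists_coprime_dot (K1 - K2) (L1 - L2)
  refine ⟨p, q, hpq, ?_⟩
  have hsR : ((K1:ℝ) - K2) * p + ((L1:ℝ) - L2) * q = 0 := by exact_mod_cast hsum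
  simp only [rowBI, dotZ, Prod.mk_sub_mk] at hK1 hK2 hL1 hL2 ⊢
  linear_combination (p:ℝ) * hK1 - (p:ℝ) * hK2 + (q:ℝ) * hL1 - (q:ℝ) * hL2 + hsR

/-- Lemma "knot": given `B ∈ SL₂(ℤ)` with `|tr B| ≠ 2` and parameters
`φ₀, ψ₀` of irreducible representations (`φ₀(B+I), ψ₀(B+I) ∈ ℤ²`, `φ₀, ψ₀ ∉ ((1/2)ℤ)²`),
there are signs `ε, ε'`, integer translations `m, n` and a coprime pair `(p, q)` such
that `φ = ε φ₀ + m`, `ψ = ε' ψ₀ + n` satisfy `(φ - ψ)(B+I)·(p,q)ᵀ = 0` and the segment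
`(1-t)φ + tψ` avoids the half-integer lattice for all `t ∈ [0,1]`. -/
theorem exists_conjugate_reps_joined_by_irreducible_path (a b c d : ℤ)
    (hdet : (!![a, b; c, d] : Matrix (Fin 2) (Fin 2) ℤ).det = 1)
    (htr : |a + d| ≠ 2) (φ₀ ψ₀ : ℝ × ℝ)
    (hφ₀ : (∃ n : ℤ, (rowBI a b c d φ₀).1 = n) ∧ (∃ n : ℤ, (rowBI a b c d φ₀).2 = n))
    (hψ₀ : (∃ n : ℤ, (rowBI a b c d ψ₀).1 = n) ∧ (∃ n : ℤ, (rowBI a b c d ψ₀).2 = n))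
    (hφ₀irr : ¬ halfLat φ₀) (hψ₀irr : ¬ halfLat ψ₀) :
    ∃ (ε ε' : ℝ) (m n : ℤ × ℤ) (p q : ℤ),
      (ε = 1 ∨ ε = -1) ∧ (ε' = 1 ∨ ε' = -1) ∧ IsCoprime p q ∧
      (let φ : ℝ × ℝ := (ε * φ₀.1 + (m.1 : ℝ), ε * φ₀.2 + (m.2 : ℝ))
       let ψ : ℝ × ℝ := (ε' * ψ₀.1 + (n.1 : ℝ), ε' * ψ₀.2 + (n.2 : ℝ))
       dotZ (rowBI a b c d (φ - ψ)) p q = 0 ∧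
       ∀ t ∈ Set.Icc (0 : ℝ) 1, ¬ halfLat ((1 - t) • φ + t • ψ)) := by
  by_cases h1 : Hh φ₀.1 <;> by_cases h2 : Hh ψ₀.1
  · -- both first coordinates half-integer: use second coordinates
    have hφ2 : ¬ Hh φ₀.2 := fun h => hφ₀irr ⟨h1, h⟩
    have hψ2 : ¬ Hh ψ₀.2 := fun h => hψ₀irr ⟨h2, h⟩
    obtain ⟨ε, m2, hε, hφa, hφb⟩ := exists_sign_shift φ₀.2 hφ2
    obtain ⟨ε', n2, hε', hψa, hψb⟩ := exists_sign_shift ψ₀.2 hψ2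
    obtain ⟨p, q, hpq, hdot⟩ := exists_dot a b c d φ₀ ψ₀ hφ₀ hψ₀ ε ε' hε hε' (0, m2) (0, n2)
    refine ⟨ε, ε', (0, m2), (0, n2), p, q, hε, hε', hpq, hdot, ?_⟩
    rintro t ⟨ht0, ht1⟩ hL
    have h2' : Hh ((1 - t) * (ε * φ₀.2 + (m2:ℝ)) + t * (ε' * ψ₀.2 + (n2:ℝ))) := hL.2
    obtain ⟨hc1, hc2⟩ := convex_bound hφa hφb hψa hψb ht0 ht1
    exact not_Hh_of hc1 hc2 h2'
  · -- φ₀.1 half-integer, ψ₀.1 not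
    have hφ2 : ¬ Hh φ₀.2 := fun h => hφ₀irr ⟨h1, h⟩
    obtain ⟨m1, hm⟩ := exists_shift_half φ₀.1 h1
    obtain ⟨ε', n1, hε', hψa, hψb⟩ := exists_sign_shift ψ₀.1 h2
    obtain ⟨p, q, hpq, hdot⟩ := exists_dot a b c d φ₀ ψ₀ hφ₀ hψ₀ (1:ℝ) ε' (Or.inl rfl) hε' (m1, 0) (n1, 0)
    refine ⟨1, ε', (m1, 0), (n1, 0), p, q, Or.inl rfl, hε', hpq, hdot, ?_⟩
    rintro t ⟨ht0, ht1⟩ hL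
    rcases eq_or_lt_of_le ht0 with heq | hpos
    · -- t = 0 : use second coordinate of φ
      have h2' : Hh ((1 - t) * ((1:ℝ) * φ₀.2 + ((0:ℤ):ℝ)) + t * (ε' * ψ₀.2 + ((0:ℤ):ℝ))) := hL.2
      have hv : (1 - t) * ((1:ℝ) * φ₀.2 + ((0:ℤ):ℝ)) + t * (ε' * ψ₀.2 + ((0:ℤ):ℝ)) = φ₀.2 := by
        rw [← heq]; push_cast; ring
      rw [hv] at h2'
      exact hφ2 h2'
    · -- t > 0 : first coordinate lies in (0, 1/2)
      have h1' : Hh ((1 - t) * ((1:ℝ) * φ₀.1 + (m1:ℝ)) + t * (ε' * ψ₀.1 + (n1:ℝ))) := hL.1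
      rcases hm with h0 | hh
      · have hv : (1 - t) * ((1:ℝ) * φ₀.1 + (m1:ℝ)) + t * (ε' * ψ₀.1 + (n1:ℝ)) =
            t * (ε' * ψ₀.1 + (n1:ℝ)) := by
          have : (1:ℝ) * φ₀.1 + (m1:ℝ) = 0 := by linarith
          rw [this]; ring
        rw [hv] at h1'
        exact not_Hh_of (mul_pos hpos hψa)
          (by nlinarith [mul_le_mul_of_nonneg_right ht1 hψa.le]) h1'
      · have hv : (1 - t) * ((1:ℝ) * φ₀.1 + (m1:ℝ)) + t * (ε' * ψ₀.1 + (n1:ℝ)) =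
            (1 - t) * (1/2) + t * (ε' * ψ₀.1 + (n1:ℝ)) := by
          have : (1:ℝ) * φ₀.1 + (m1:ℝ)= 1/2 := by linarith
          rw [this]
        rw [hv] at h1'
        exact not_Hh_of (by nlinarith [mul_pos hpos hψa])
          (by nlinarith [mul_lt_mul_of_pos_left hψb hpos]) h1'
  · -- ψ₀.1 half-integer, φ₀.1 not
    have hψ2 : ¬ Hh ψ₀.2 := fun h => hψ₀irr ⟨h2, h⟩
    obtain ⟨ε, m1, hε, hφa, hφb⟩ := exists_sign_shift φ₀.1 h1
    obtain ⟨n1, hn⟩ := exists_shift_half ψ₀.1 h2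
    obtain ⟨p, q, hpq, hdot⟩ := exists_dot a b c d φ₀ ψ₀ hφ₀ hψ₀ ε (1:ℝ) hε (Or.inl rfl) (m1, 0) (n1, 0)
    refine ⟨ε, 1, (m1, 0), (n1, 0), p, q, hε, Or.inl rfl, hpq, hdot, ?_⟩
    rintro t ⟨ht0, ht1⟩ hL
    rcases eq_or_lt_of_le ht1 with heq | hlt
    · -- t = 1 : use second coordinate of ψ
      have h2' : Hh ((1 - t) * (ε * φ₀.2 + ((0:ℤ):ℝ)) + t * ((1:ℝ) * ψ₀.2 + ((0:ℤ):ℝ))) := hL.2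
      have hv : (1 - t) * (ε * φ₀.2 + ((0:ℤ):ℝ)) + t * ((1:ℝ) * ψ₀.2 + ((0:ℤ):ℝ)) = ψ₀.2 := by
        rw [heq]; push_cast; ring
      rw [hv] at h2'
      exact hψ2 h2'
    · -- t < 1 : first coordinate lies in (0, 1/2)
      have h1' : Hh ((1 - t) * (ε * φ₀.1 + (m1:ℝ)) + t * ((1:ℝ) * ψ₀.1 + (n1:ℝ))) := hL.1
      rcases hn with h0 | hh
      · have hv : (1 - t) * (ε * φ₀.1 + (m1:ℝ)) + t * ((1:ℝ) * ψ₀.1 + (n1:ℝ)) =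
            (1 - t) * (ε * φ₀.1 + (m1:ℝ)) := by
          have : (1:ℝ) * ψ₀.1 + (n1:ℝ) = 0 := by linarith
          rw [this]; ring
        rw [hv] at h1'
        exact not_Hh_of (mul_pos (by linarith) hφa)
          (by nlinarith [mul_le_mul_of_nonneg_right (by linarith : 1 - t ≤ 1) hφa.le]) h1'
      · have hv : (1 - t) * (ε * φ₀.1 + (m1:ℝ)) + t * ((1:ℝ) * ψ₀.1 + (n1:ℝ)) =
            (1 - t) * (ε * φ₀.1 + (m1:ℝ)) + t * (1/2) := by
          have : (1:ℝ) * ψ₀.1 + (n1:ℝ) = 1/2 := by linarith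
          rw [this]
        rw [hv] at h1'
        exact not_Hh_of (by nlinarith [mul_pos (by linarith : (0:ℝ) < 1 - t) hφa])
          (by nlinarith [mul_lt_mul_of_pos_left hφb (by linarith : (0:ℝ) < 1 - t)]) h1'
  · -- neither first coordinate half-integer
    obtain ⟨ε, m1, hε, hφa, hφb⟩ := exists_sign_shift φ₀.1 h1
    obtain ⟨ε', n1, hε', hψa, hψb⟩ := exists_sign_shift ψ₀.1 h2
    obtain ⟨p, q, hpq, hdot⟩ := exists_dot a b c d φ₀ ψ₀ hφ₀ hψ₀ ε ε' hε hε' (m1, 0) (n1, 0)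
    refine ⟨ε, ε', (m1, 0), (n1, 0), p, q, hε, hε', hpq, hdot, ?_⟩
    rintro t ⟨ht0, ht1⟩ hL
    have h1' : Hh ((1 - t) * (ε * φ₀.1 + (m1:ℝ)) + t * (ε' * ψ₀.1 + (n1:ℝ))) := hL.1
    obtain ⟨hc1, hc2⟩ := convex_bound hφa hφb hψa hψb ht0 ht1
    exact not_Hh_of hc1 hc2 h1'
end

section
/- Let B = !![5, 2; 2, 1], φ = (3/4, 1/4) and ψ = (1/4, 1/4). Let ε, ε' ∈ {1, −1} and η, θ ∈ ℤ², and set φ' = ε·φ + η and ψ' = ε'·ψ + θ. Then for every coprime pair (p, q) ∈ ℤ² with (φ' − ψ')(B+I)·(p,q)ᵀ = 0, both p and q are odd, p·φ'₁ + q·φ'₂ ∈ (1/2)ℤ and p·ψ'₁ + q·ψ'₂ ∈ (1/2)ℤ, and for all r, s ∈ ℤ one has φ'(B+I)·(r,s)ᵀ ∈ ℤ and ψ'(B+I)·(r,s)ᵀ ∈ ℤ. (Hence both representations ρ_{φ'} and ρ_{ψ'} are central when restricted to the boundary torus of the knot complement.) -/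
lemma rowBI_sub (a b c d : ℤ) (v w : ℝ × ℝ) :
    rowBI a b c d (v - w) = rowBI a b c d v - rowBI a b c d w := by
  ext <;> simp only [rowBI, Prod.fst_sub, Prod.snd_sub] <;> ring

lemma dotZ_sub (v w : ℝ × ℝ) (p q : ℤ) : dotZ (v - w) p q = dotZ v p q - dotZ w p q := by
  simp only [dotZ, Prod.fst_sub, Prod.snd_sub]
  ring

lemma dotZ_intCast (x y p q : ℤ) : dotZ ((x : ℝ), (y : ℝ)) p q = ((x * p + y * q : ℤ) : ℝ) := by
  simp [dotZ]

lemma rowBI_five_two_two_one_phi (e m n : ℤ) :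
    rowBI 5 2 2 1 ((e : ℝ) * (3 / 4) + m, (e : ℝ) * (1 / 4) + n) =
      (((5 * e + 6 * m + 2 * n : ℤ) : ℝ), ((2 * e + 2 * m + 2 * n : ℤ) : ℝ)) := by
  ext <;> simp only [rowBI] <;> push_cast <;> ring

lemma rowBI_five_two_two_one_psi (e m n : ℤ) :
    rowBI 5 2 2 1 ((e : ℝ) * (1 / 4) + m, (e : ℝ) * (1 / 4) + n) =
      (((2 * e + 6 * m + 2 * n : ℤ) : ℝ), ((e + 2 * m + 2 * n : ℤ) : ℝ)) := by
  ext <;> simp only [rowBI] <;> push_cast <;> ring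

lemma Int.odd_of_isCoprime_of_even {p q : ℤ} (hpq : IsCoprime p q) (hp : Even p) : Odd q := by
  rw [← Int.not_even_iff_odd]
  intro hq
  have h2 : IsUnit (2 : ℤ) := hpq.isUnit_of_dvd' hp.two_dvd hq.two_dvd
  rw [Int.isUnit_iff] at h2
  omega

lemma Int.odd_and_odd_of_mul_add_mul_eq_zero {A C p q : ℤ} (hA : Odd A) (hC : Odd C)
    (hpq : IsCoprime p q) (h : A * p + C * q = 0) : Odd p ∧ Odd q := by
  have hpq_parity : Even p ↔ Even q := by
    have : Even (A * p + C * q) := h ▸ Even.zero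
    simpa [parity_simps, Int.not_even_iff_odd.mpr hA, Int.not_even_iff_odd.mpr hC] using this
  constructor <;> by_contra hodd <;> rw [Int.not_odd_iff_even] at hodd
  · exact Int.not_even_iff_odd.mpr (Int.odd_of_isCoprime_of_even hpq hodd) (hpq_parity.mp hodd)
  · exact Int.not_even_iff_odd.mpr (Int.odd_of_isCoprime_of_even hpq.symm hodd)
      (hpq_parity.mpr hodd)

lemma exists_half_int_of_even (e m n p q a b : ℤ) (h : Even (a * p + b * q)) :
    ∃ N : ℤ, (p : ℝ) * ((e : ℝ) * (a / 4) + m) + (q : ℝ) * ((e : ℝ) * (b / 4) + n) = (N : ℝ) / 2 := by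
  obtain ⟨k, hk⟩ := h
  refine ⟨e * k + 2 * (p * m + q * n), ?_⟩
  have hkR : (a : ℝ) * p + b * q = 2 * k := by exact_mod_cast (by omega : a * p + b * q = 2 * k)
  push_cast
  linear_combination ((e : ℝ) / 4) * hkR

lemma exists_odd_intCast_eq_of_eq_one_or_neg_one {ε : ℝ} (h : ε = 1 ∨ ε = -1) :
    ∃ e : ℤ, Odd e ∧ (e : ℝ) = ε := by
  rcases h with rfl | rfl
  · exact ⟨1, odd_one, by simp⟩
  · exact ⟨-1, by decide, by simp⟩

/-- Proposition "example": for `B = !![5, 2; 2, 1]`, `φ = (3/4, 1/4)`,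
`ψ = (1/4, 1/4)`, any conjugate representatives `φ' = ε φ + η`, `ψ' = ε' ψ + θ` and any
coprime `(p, q)` with `(φ' - ψ')(B+I)·(p,q)ᵀ = 0` have `p, q` odd,
`β_{φ'}, β_{ψ'} ∈ (1/2)ℤ` and `α_{φ'}, α_{ψ'} ∈ ℤ`; hence both `ρ_{φ'}` and `ρ_{ψ'}`
are central on the boundary torus of the knot complement. -/
theorem example_central_on_boundary (ε ε' : ℝ) (hε : ε = 1 ∨ ε = -1)
    (hε' : ε' = 1 ∨ ε' = -1) (η θ : ℤ × ℤ) :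
    let φ' : ℝ × ℝ := (ε * (3 / 4) + (η.1 : ℝ), ε * (1 / 4) + (η.2 : ℝ))
    let ψ' : ℝ × ℝ := (ε' * (1 / 4) + (θ.1 : ℝ), ε' * (1 / 4) + (θ.2 : ℝ))
    ∀ p q : ℤ, IsCoprime p q → dotZ (rowBI 5 2 2 1 (φ' - ψ')) p q = 0 →
      Odd p ∧ Odd q ∧
      (∃ n : ℤ, (p : ℝ) * φ'.1 + (q : ℝ) * φ'.2 = (n : ℝ) / 2) ∧
      (∃ n : ℤ, (p : ℝ) * ψ'.1 + (q : ℝ) * ψ'.2 = (n : ℝ) / 2) ∧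
      (∀ r s : ℤ, (∃ n : ℤ, dotZ (rowBI 5 2 2 1 φ') r s = (n : ℝ)) ∧
        (∃ n : ℤ, dotZ (rowBI 5 2 2 1 ψ') r s = (n : ℝ))) := by
  obtain ⟨e, he, rfl⟩ := exists_odd_intCast_eq_of_eq_one_or_neg_one hε
  obtain ⟨e', he', rfl⟩ := exists_odd_intCast_eq_of_eq_one_or_neg_one hε'
  rw [Int.odd_iff] at he he'
  intro φ' ψ' p q hpq h0
  rw [rowBI_sub, dotZ_sub, rowBI_five_two_two_one_phi, rowBI_five_two_two_one_psi,
    dotZ_intCast, dotZ_intCast, sub_eq_zero, Int.cast_inj] at h0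
  have hA : Odd (5 * e - 2 * e' + 6 * (η.1 - θ.1) + 2 * (η.2 - θ.2)) := by
    rw [Int.odd_iff]; omega
  have hC : Odd (2 * e - e' + 2 * (η.1 - θ.1) + 2 * (η.2 - θ.2)) := by
    rw [Int.odd_iff]; omega
  obtain ⟨hp, hq⟩ := Int.odd_and_odd_of_mul_add_mul_eq_zero hA hC hpq (by linear_combination h0)
  have h3pq : Even (3 * p + 1 * q) := by
    rw [Int.odd_iff] at hp hq; rw [Int.even_iff]; omega
  refine ⟨hp, hq, ?_, ?_, fun r s => ⟨?_, ?_⟩⟩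
  · simpa [φ'] using exists_half_int_of_even e η.1 η.2 p q 3 1 h3pq
  · simpa [ψ'] using exists_half_int_of_even e' θ.1 θ.2 p q 1 1 (by simpa using hp.add_odd hq)
  · exact ⟨_, by rw [rowBI_five_two_two_one_phi, dotZ_intCast]⟩
  · exact ⟨_, by rw [rowBI_five_two_two_one_psi, dotZ_intCast]⟩
end

section
/- Let B = !![5, 2; 2, 1]. If φ = (φ₁, φ₂) ∈ ℝ² satisfies φ(B+I) ∈ ℤ² and φ ∉ ((1/2)ℤ)², then there exists θ ∈ ℤ² with φ = (3/4, 1/4) + θ, or φ = −(3/4, 1/4) + θ, or φ = (1/4, 1/4) + θ, or φ = −(1/4, 1/4) + θ. Moreover (3/4, 1/4) is not of the form ±(1/4, 1/4) + θ for any θ ∈ ℤ², so these two parameters represent distinct conjugacy classes. -/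
theorem det_mul_eq_rowBI (a b c d : ℤ) (v : ℝ × ℝ) :
    (((a : ℝ) + 1) * (d + 1) - b * c) * v.1 =
        (d + 1) * (rowBI a b c d v).1 - c * (rowBI a b c d v).2 ∧
      (((a : ℝ) + 1) * (d + 1) - b * c) * v.2 =
        (a + 1) * (rowBI a b c d v).2 - b * (rowBI a b c d v).1 := by
  constructor <;> simp only [rowBI] <;> ring

theorem exists_quarter_of_rowBI_integral {φ : ℝ × ℝ}
    (h : (∃ m : ℤ, (rowBI 5 2 2 1 φ).1 = m) ∧ (∃ n : ℤ, (rowBI 5 2 2 1 φ).2 = n)) :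
    ∃ k l : ℤ, Even (k + l) ∧ φ = ((k : ℝ) / 4, (l : ℝ) / 4) := by
  obtain ⟨⟨m, hm⟩, ⟨n, hn⟩⟩ := h
  obtain ⟨h₁, h₂⟩ := det_mul_eq_rowBI 5 2 2 1 φ
  rw [hm, hn] at h₁ h₂
  norm_num at h₁ h₂
  refine ⟨m - n, 3 * n - m, ⟨n, by ring⟩, Prod.ext ?_ ?_⟩
  · push_cast; linarith
  · push_cast; linarith

theorem halfLat_quarter_of_even {k l : ℤ} (hk : Even k) (hl : Even l) :
    halfLat ((k : ℝ) / 4, (l : ℝ) / 4) := by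
  obtain ⟨i, rfl⟩ := hk
  obtain ⟨j, rfl⟩ := hl
  exact ⟨⟨i, by push_cast; ring⟩, ⟨j, by push_cast; ring⟩⟩

theorem odd_of_not_halfLat_quarter {k l : ℤ} (hkl : Even (k + l))
    (h : ¬ halfLat ((k : ℝ) / 4, (l : ℝ) / 4)) : Odd k ∧ Odd l := by
  rcases Int.even_or_odd k with hk | hk
  · exact absurd (halfLat_quarter_of_even hk ((Int.even_add.mp hkl).mp hk)) h
  · exact ⟨hk, Int.not_even_iff_odd.mp fun hl => Int.not_even_iff_odd.mpr hk
      ((Int.even_add.mp hkl).mpr hl)⟩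

theorem exists_quarter_eq_of_odd {k : ℤ} (hk : Odd k) :
    ∃ t : ℤ, (k : ℝ) / 4 = 1 / 4 + t ∨ (k : ℝ) / 4 = -(1 / 4) + t := by
  obtain ⟨j, rfl⟩ := hk
  rcases Int.even_or_odd j with ⟨i, rfl⟩ | ⟨i, rfl⟩
  · exact ⟨i, Or.inl (by push_cast; ring)⟩
  · exact ⟨i + 1, Or.inr (by push_cast; ring)⟩

theorem quarter_classes_of_odd {k l : ℤ} (hk : Odd k) (hl : Odd l) :
    ∃ θ : ℤ × ℤ,
      ((k : ℝ) / 4, (l : ℝ) / 4) = (3 / 4 + (θ.1 : ℝ), 1 / 4 + (θ.2 : ℝ)) ∨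
      ((k : ℝ) / 4, (l : ℝ) / 4) = (-(3 / 4) + (θ.1 : ℝ), -(1 / 4) + (θ.2 : ℝ)) ∨
      ((k : ℝ) / 4, (l : ℝ) / 4) = (1 / 4 + (θ.1 : ℝ), 1 / 4 + (θ.2 : ℝ)) ∨
      ((k : ℝ) / 4, (l : ℝ) / 4) = (-(1 / 4) + (θ.1 : ℝ), -(1 / 4) + (θ.2 : ℝ)) := by
  obtain ⟨s, hs | hs⟩ := exists_quarter_eq_of_odd hk <;>
    obtain ⟨t, ht | ht⟩ := exists_quarter_eq_of_odd hl <;> simp only [Prod.mk.injEq]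
  · exact ⟨(s, t), Or.inr (Or.inr (Or.inl ⟨hs, ht⟩))⟩
  · exact ⟨(s + 1, t), Or.inr (Or.inl ⟨by push_cast; linarith, ht⟩)⟩
  · exact ⟨(s - 1, t), Or.inl ⟨by push_cast; linarith, ht⟩⟩
  · exact ⟨(s, t), Or.inr (Or.inr (Or.inr ⟨hs, ht⟩))⟩

theorem intCast_ne_half (t : ℤ) : (t : ℝ) ≠ 1 / 2 := by
  intro h
  have : 2 * t = 1 := by exact_mod_cast (by linarith : (2 * t : ℝ) = 1)
  omega

/-- for `B = !![5, 2; 2, 1]`, every `φ` with `φ(B+I) ∈ ℤ²` and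
`φ ∉ ((1/2)ℤ)²` equals `±(3/4, 1/4) + θ` or `±(1/4, 1/4) + θ` for some `θ ∈ ℤ²`, and
`(3/4, 1/4)` is not of the form `±(1/4, 1/4) + θ`; so there are exactly two conjugacy
classes of irreducible representations. -/
theorem two_irreducible_classes (φ : ℝ × ℝ)
    (h1 : (∃ n : ℤ, (rowBI 5 2 2 1 φ).1 = n) ∧ (∃ n : ℤ, (rowBI 5 2 2 1 φ).2 = n))
    (h2 : ¬ halfLat φ) :
    (∃ θ : ℤ × ℤ,
      φ = (3 / 4 + (θ.1 : ℝ), 1 / 4 + (θ.2 : ℝ)) ∨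
      φ = (-(3 / 4) + (θ.1 : ℝ), -(1 / 4) + (θ.2 : ℝ)) ∨
      φ = (1 / 4 + (θ.1 : ℝ), 1 / 4 + (θ.2 : ℝ)) ∨
      φ = (-(1 / 4) + (θ.1 : ℝ), -(1 / 4) + (θ.2 : ℝ))) ∧
    ¬ (∃ θ : ℤ × ℤ,
      ((3 / 4 : ℝ), (1 / 4 : ℝ)) = (1 / 4 + (θ.1 : ℝ), 1 / 4 + (θ.2 : ℝ)) ∨
      ((3 / 4 : ℝ), (1 / 4 : ℝ)) = (-(1 / 4) + (θ.1 : ℝ), -(1 / 4) + (θ.2 : ℝ))) := by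
  obtain ⟨k, l, hkl, rfl⟩ := exists_quarter_of_rowBI_integral h1
  obtain ⟨hk, hl⟩ := odd_of_not_halfLat_quarter hkl h2
  refine ⟨quarter_classes_of_odd hk hl, ?_⟩
  rintro ⟨θ, h | h⟩ <;> simp only [Prod.mk.injEq] at h
  · exact intCast_ne_half θ.1 (by linarith [h.1])
  · exact intCast_ne_half θ.2 (by linarith [h.2])
end

section
/- Let B = !![3, 4; 2, 3], φ = (1/4, 0) and ψ = (1/4, 1/2). Let ε, ε' ∈ {1, −1} and η, θ ∈ ℤ², and set φ' = ε·φ + η and ψ' = ε'·ψ + θ. Then for every coprime pair (p, q) ∈ ℤ² with (φ' − ψ')(B+I)·(p,q)ᵀ = 0, one has p·φ'₁ + q·φ'₂ ∈ (1/2)ℤ and p·ψ'₁ + q·ψ'₂ ∈ (1/2)ℤ, and for all r, s ∈ ℤ, φ'(B+I)·(r,s)ᵀ ∈ ℤ and ψ'(B+I)·(r,s)ᵀ ∈ ℤ. (Hence both ρ_{φ'} and ρ_{ψ'} are central when restricted to the boundary torus of the knot complement.) -/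
lemma exists_odd_intCast_eq_of_eq_one_or_eq_neg_one {ε : ℝ} (hε : ε = 1 ∨ ε = -1) :
    ∃ e : ℤ, Odd e ∧ (e : ℝ) = ε := by
  rcases hε with rfl | rfl
  · exact ⟨1, odd_one, Int.cast_one⟩
  · exact ⟨-1, odd_neg_one, by push_cast; rfl⟩

lemma Int.even_of_odd_mul_add_even_mul {M N p q : ℤ} (hM : Odd M) (hN : Even N)
    (h : M * p + N * q = 0) : Even p := by
  have hMp : Even (M * p) := by
    rw [eq_neg_of_add_eq_zero_left h]
    exact (hN.mul_right q).neg
  exact (Int.even_mul.mp hMp).resolve_left (Int.not_even_iff_odd.mpr hM)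

lemma exists_even_mul_add_mul_eq_half_int {v : ℝ × ℝ} {x y p : ℤ} (hx : v.1 = x / 4)
    (hy : v.2 = y / 2) (hp : Even p) (q : ℤ) :
    ∃ n : ℤ, (p : ℝ) * v.1 + (q : ℝ) * v.2 = (n : ℝ) / 2 := by
  obtain ⟨k, rfl⟩ := hp
  exact ⟨k * x + q * y, by rw [hx, hy]; push_cast; ring⟩

/-- for `B = !![3, 4; 2, 3]`, `φ = (1/4, 0)`, `ψ = (1/4, 1/2)`, any
conjugate representatives `φ' = ε φ + η`, `ψ' = ε' ψ + θ` and any coprime `(p, q)` with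
`(φ' - ψ')(B+I)·(p,q)ᵀ = 0` satisfy `β_{φ'}, β_{ψ'} ∈ (1/2)ℤ` and `α_{φ'}, α_{ψ'} ∈ ℤ`;
hence both `ρ_{φ'}` and `ρ_{ψ'}` are central on the boundary torus of the knot
complement. -/
theorem example2_central_on_boundary (ε ε' : ℝ) (hε : ε = 1 ∨ ε = -1)
    (hε' : ε' = 1 ∨ ε' = -1) (η θ : ℤ × ℤ) :
    let φ' : ℝ × ℝ := (ε * (1 / 4) + (η.1 : ℝ), ε * 0 + (η.2 : ℝ))
    let ψ' : ℝ × ℝ := (ε' * (1 / 4) + (θ.1 : ℝ), ε' * (1 / 2) + (θ.2 : ℝ))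
    ∀ p q : ℤ, IsCoprime p q → dotZ (rowBI 3 4 2 3 (φ' - ψ')) p q = 0 →
      (∃ n : ℤ, (p : ℝ) * φ'.1 + (q : ℝ) * φ'.2 = (n : ℝ) / 2) ∧
      (∃ n : ℤ, (p : ℝ) * ψ'.1 + (q : ℝ) * ψ'.2 = (n : ℝ) / 2) ∧
      (∀ r s : ℤ, (∃ n : ℤ, dotZ (rowBI 3 4 2 3 φ') r s = (n : ℝ)) ∧
        (∃ n : ℤ, dotZ (rowBI 3 4 2 3 ψ') r s = (n : ℝ))) := by
  obtain ⟨e, he, rfl⟩ := exists_odd_intCast_eq_of_eq_one_or_eq_neg_one hε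
  obtain ⟨e', he', rfl⟩ := exists_odd_intCast_eq_of_eq_one_or_eq_neg_one hε'
  intro φ' ψ' p q _ h
  have hφ : rowBI 3 4 2 3 φ' =
      (((e + 4 * η.1 + 2 * η.2 : ℤ) : ℝ), ((e + 4 * η.1 + 4 * η.2 : ℤ) : ℝ)) := by
    ext <;> simp only [rowBI, φ'] <;> push_cast <;> ring
  have hψ : rowBI 3 4 2 3 ψ' =
      (((2 * e' + 4 * θ.1 + 2 * θ.2 : ℤ) : ℝ),
        ((3 * e' + 4 * θ.1 + 4 * θ.2 : ℤ) : ℝ)) := by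
    ext <;> simp only [rowBI, ψ'] <;> push_cast <;> ring
  have hp : Even p := by
    rw [rowBI_sub, dotZ_sub, hφ, hψ, dotZ_intCast, dotZ_intCast, sub_eq_zero, Int.cast_inj] at h
    refine Int.even_of_odd_mul_add_even_mul
      (M := e + 4 * η.1 + 2 * η.2 - (2 * e' + 4 * θ.1 + 2 * θ.2))
      (N := e + 4 * η.1 + 4 * η.2 - (3 * e' + 4 * θ.1 + 4 * θ.2)) (p := p) (q := q) ?_ ?_
      (by linear_combination h)
    · rw [Int.odd_iff] at he ⊢
      omega
    · rw [Int.odd_iff] at he he'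
      rw [Int.even_iff]
      omega
  refine ⟨exists_even_mul_add_mul_eq_half_int (x := e + 4 * η.1) (y := 2 * η.2) ?_ ?_ hp q,
    exists_even_mul_add_mul_eq_half_int (x := e' + 4 * θ.1) (y := e' + 2 * θ.2) ?_ ?_ hp q,
    fun r s => ⟨⟨_, by rw [hφ, dotZ_intCast]⟩, ⟨_, by rw [hψ, dotZ_intCast]⟩⟩⟩ <;>
  · simp only [φ', ψ']
    push_cast
    ring
end

section
/- Let (α, β) ∈ ℝ². Consider the set of purely imaginary quaternions v (i.e. v with zero real part) satisfying u(2πα)·v·u(2πα)⁻¹ = v and u(2πβ)·v·u(2πβ)⁻¹ = v. If (α, β) ∉ ((1/2)ℤ)², this set equals ℝ·i, the real span of the quaternion unit i. If (α, β) ∈ ((1/2)ℤ)², this set equals the whole 3-dimensional real space of purely imaginary quaternions. -/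
open Real

lemma uq_conj_iff (θ : ℝ) (v : Quaternion ℝ) :
    uq θ * v * (uq θ)⁻¹ = v ↔ Real.sin θ * v.imJ = 0 ∧ Real.sin θ * v.imK = 0 := by
  rw [mul_inv_eq_iff_eq_mul₀ (uq_ne_zero θ)]
  simp only [Quaternion.ext_iff, Quaternion.re_mul, Quaternion.imI_mul,
    Quaternion.imJ_mul, Quaternion.imK_mul]
  simp only [uq]
  constructor
  · rintro ⟨h1, h2, h3, h4⟩
    constructor <;> linarith
  · rintro ⟨h1, h2⟩
    refine ⟨by ring, by ring, by linarith, by linarith⟩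

lemma sin_half_iff (α : ℝ) : Real.sin (2 * π * α) = 0 ↔ ∃ n : ℤ, α = (n : ℝ) / 2 := by
  rw [Real.sin_eq_zero_iff]
  constructor
  · rintro ⟨n, hn⟩
    exact ⟨n, by field_simp at hn ⊢; nlinarith [pi_ne_zero, Real.pi_pos]⟩
  · rintro ⟨n, rfl⟩
    exact ⟨n, by ring⟩

/-- the set of purely imaginary quaternions fixed by conjugation by both
`u(2πα)` and `u(2πβ)` is `ℝ i` when `(α, β) ∉ ((1/2)ℤ)²`, and is the whole space of
purely imaginary quaternions when `(α, β) ∈ ((1/2)ℤ)²`. -/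
theorem adjoint_invariants_torus (α β : ℝ) :
    (¬ ((∃ n : ℤ, α = (n : ℝ) / 2) ∧ (∃ n : ℤ, β = (n : ℝ) / 2)) →
      {v : Quaternion ℝ | v.re = 0 ∧
          uq (2 * π * α) * v * (uq (2 * π * α))⁻¹ = v ∧
          uq (2 * π * β) * v * (uq (2 * π * β))⁻¹ = v} =
        {v : Quaternion ℝ | ∃ r : ℝ, v = r • (⟨0, 1, 0, 0⟩ : Quaternion ℝ)}) ∧
    (((∃ n : ℤ, α = (n : ℝ) / 2) ∧ (∃ n : ℤ, β = (n : ℝ) / 2)) →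
      {v : Quaternion ℝ | v.re = 0 ∧
          uq (2 * π * α) * v * (uq (2 * π * α))⁻¹ = v ∧
          uq (2 * π * β) * v * (uq (2 * π * β))⁻¹ = v} =
        {v : Quaternion ℝ | v.re = 0}) := by
  constructor
  · intro h
    ext v
    simp only [Set.mem_setOf_eq, uq_conj_iff]
    constructor
    · rintro ⟨hre, ⟨ha1, ha2⟩, hb1, hb2⟩
      have hs : Real.sin (2 * π * α) ≠ 0 ∨ Real.sin (2 * π * β) ≠ 0 := by
        by_contra hc
        push_neg at hc
        exact h ⟨(sin_half_iff α).1 hc.1, (sin_half_iff β).1 hc.2⟩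
      have hJ : v.imJ = 0 := by
        rcases hs with hs | hs
        · exact (mul_eq_zero.1 ha1).resolve_left hs
        · exact (mul_eq_zero.1 hb1).resolve_left hs
      have hK : v.imK = 0 := by
        rcases hs with hs | hs
        · exact (mul_eq_zero.1 ha2).resolve_left hs
        · exact (mul_eq_zero.1 hb2).resolve_left hs
      exact ⟨v.imI, by ext <;> simp [hre, hJ, hK]⟩
    · rintro ⟨r, rfl⟩
      simp
  · rintro ⟨⟨n, ha⟩, ⟨m, hb⟩⟩
    have hsa : Real.sin (2 * π * α) = 0 := (sin_half_iff α).2 ⟨n, ha⟩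
    have hsb : Real.sin (2 * π * β) = 0 := (sin_half_iff β).2 ⟨m, hb⟩
    ext v
    simp [Set.mem_setOf_eq, uq_conj_iff, hsa, hsb]
end
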